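/- arXiv:2301.04935 — 4 statements merged into one kernel-verified Lean document; each statement's English description precedes it below -/
import Mathlib

section
/- Closed-form ProxSPS update with ℓ₂-regularization: for φ(x) = (λ/2)‖x‖², g ≠ 0, the minimizer of y ↦ max{f₀ + ⟨g, y − x⟩, C} + (λ/2)‖y‖² + (1/(2α))‖y − x‖² equals (1/(1 + αλ))(x − τ⁺ g), where τ⁺ = min{α, max(0, ((1 + αλ)(f₀ − C) − αλ⟨g, x⟩)/‖g‖²)}. -/
open RealInnerProductSpace

/-- Closed-form ProxSPS update with ℓ₂-regularization: for `g ≠ 0` the unique minimizer of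
`y ↦ max{f₀ + ⟪g, y - x⟫, C} + (λ/2)‖y‖² + (1/(2α))‖y - x‖²` equals
`(1/(1+αλ)) • (x - τ⁺ • g)` with
`τ⁺ = min{α, max(0, ((1+αλ)(f₀ - C) - αλ⟪g, x⟫)/‖g‖²)}`. -/
theorem proxsps_closed_form {n : ℕ} (lam α f₀ C : ℝ) (hlam : 0 ≤ lam) (hα : 0 < α)
    (hC : C ≤ f₀) (x g : EuclideanSpace ℝ (Fin n)) (hg : g ≠ 0) :
    let τ : ℝ := min α (max 0 (((1 + α * lam) * (f₀ - C) - α * lam * ⟪g, x⟫) / ‖g‖ ^ 2))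
    let F : EuclideanSpace ℝ (Fin n) → ℝ := fun y =>
      max (f₀ + ⟪g, y - x⟫) C + lam / 2 * ‖y‖ ^ 2 + 1 / (2 * α) * ‖y - x‖ ^ 2
    IsMinOn F Set.univ ((1 + α * lam)⁻¹ • (x - τ • g)) ∧
      ∀ y, IsMinOn F Set.univ y → y = (1 + α * lam)⁻¹ • (x - τ • g) := by
  intro τ F
  have hgnorm : (0:ℝ) < ‖g‖ := norm_pos_iff.mpr hg
  have hgn : (0:ℝ) < ‖g‖ ^ 2 := by positivity
  set A : ℝ := 1 + α * lam with hA_def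
  have hA : 0 < A := by nlinarith
  set t : ℝ := (A * (f₀ - C) - α * lam * ⟪g, x⟫) / ‖g‖ ^ 2 with ht_def
  have hτ_def : τ = min α (max 0 t) := rfl
  set y₀ : EuclideanSpace ℝ (Fin n) := A⁻¹ • (x - τ • g) with hy₀_def
  have hτ0 : 0 ≤ τ := le_min hα.le (le_max_left 0 t)
  have hτα : τ ≤ α := min_le_left _ _
  -- inner products with y₀
  have hinner : ∀ d : EuclideanSpace ℝ (Fin n),
      ⟪y₀, d⟫ = A⁻¹ * (⟪x, d⟫ - τ * ⟪g, d⟫) := by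
    intro d
    rw [hy₀_def, real_inner_smul_left, inner_sub_left, real_inner_smul_left]
  have hgy : ⟪g, y₀ - x⟫ = A⁻¹ * (⟪g, x⟫ - τ * ‖g‖ ^ 2) - ⟪g, x⟫ := by
    rw [inner_sub_right]
    have : ⟪g, y₀⟫ = ⟪y₀, g⟫ := real_inner_comm _ _
    rw [this, hinner g, real_inner_comm x g, real_inner_self_eq_norm_sq]
  set v₁ : ℝ := f₀ + ⟪g, y₀ - x⟫ with hv₁
  set s : ℝ := τ / α with hs_def
  have hs0 : 0 ≤ s := div_nonneg hτ0 hα.le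
  have hs1 : s ≤ 1 := (div_le_one hα).mpr hτα
  -- the key scalar identity at the candidate point
  have hmax : max v₁ C = s * v₁ + (1 - s) * C := by
    have ht' : t * ‖g‖ ^ 2 = A * (f₀ - C) - α * lam * ⟪g, x⟫ := by
      rw [ht_def]; field_simp
    have hAinv' : A * A⁻¹ = 1 := mul_inv_cancel₀ hA.ne'
    have hv : A * (v₁ - C) = (t - τ) * ‖g‖ ^ 2 := by
      rw [hv₁, hgy]
      linear_combination (-1 : ℝ) * ht' + (⟪g, x⟫ - τ * ‖g‖ ^ 2) * hAinv'
        + (-⟪g, x⟫) * hA_def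
    rcases le_total t 0 with ht0 | ht0
    · -- τ = 0, v₁ ≤ C
      have hτ' : τ = 0 := by
        rw [hτ_def, max_eq_left ht0, min_eq_right hα.le]
      have hvle : v₁ ≤ C := by
        rw [hτ'] at hv
        by_contra h
        push_neg at h
        have h1 : 0 < A * (v₁ - C) := mul_pos hA (sub_pos.mpr h)
        have h2 : (t - 0) * ‖g‖ ^ 2 ≤ 0 :=
          mul_nonpos_of_nonpos_of_nonneg (by linarith) hgn.le
        linarith
      rw [max_eq_right hvle, hs_def, hτ']
      ring
    · rcases le_total t α with htα | htα
      · -- τ = t, v₁ = C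
        have hτ' : τ = t := by
          rw [hτ_def, max_eq_right ht0, min_eq_right htα]
        have hvC : v₁ = C := by
          rw [hτ'] at hv
          have h0 : A * (v₁ - C) = 0 := by rw [hv]; ring
          have := (mul_eq_zero.mp h0).resolve_left hA.ne'
          linarith
        rw [hvC]; simp [max_self]; ring
      · -- τ = α, s = 1, v₁ ≥ C
        have hτ' : τ = α := by
          rw [hτ_def, max_eq_right ht0, min_eq_left htα]
        have hs' : s = 1 := by rw [hs_def, hτ']; field_simp
        have hvge : C ≤ v₁ := by
          rw [hτ'] at hv
          by_contra h
          push_neg at h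
          have h1 : A * (v₁ - C) < 0 := mul_neg_of_pos_of_neg hA (by linarith)
          have h2 : 0 ≤ (t - α) * ‖g‖ ^ 2 :=
            mul_nonneg (by linarith) hgn.le
          linarith
        rw [max_eq_left hvge, hs']; ring
  -- key inequality
  have key : ∀ y, F y₀ + A / (2 * α) * ‖y - y₀‖ ^ 2 ≤ F y := by
    intro y
    set d : EuclideanSpace ℝ (Fin n) := y - y₀ with hd_def
    have hyy : y = y₀ + d := by rw [hd_def]; abel
    have hyx : y - x = (y₀ - x) + d := by rw [hd_def]; abel
    have hn1 : ‖y‖ ^ 2 = ‖y₀‖ ^ 2 + 2 * ⟪y₀, d⟫ + ‖d‖ ^ 2 := by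
      rw [hyy]; exact norm_add_sq_real _ _
    have hn2 : ‖y - x‖ ^ 2 = ‖y₀ - x‖ ^ 2 + 2 * ⟪y₀ - x, d⟫ + ‖d‖ ^ 2 := by
      rw [hyx]; exact norm_add_sq_real _ _
    have hi : ⟪g, y - x⟫ = ⟪g, y₀ - x⟫ + ⟪g, d⟫ := by
      rw [hyx, inner_add_right]
    -- scalar identity for the gradient of the quadratic part
    have hscal : lam * ⟪y₀, d⟫ + α⁻¹ * ⟪y₀ - x, d⟫ = -(s * ⟪g, d⟫) := by
      rw [inner_sub_left, hinner d, hs_def]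
      field_simp
      ring
    -- bound on the max term
    have hmb : s * (v₁ + ⟪g, d⟫) + (1 - s) * C ≤ max (v₁ + ⟪g, d⟫) C := by
      have h1 : v₁ + ⟪g, d⟫ ≤ max (v₁ + ⟪g, d⟫) C := le_max_left _ _
      have h2 : C ≤ max (v₁ + ⟪g, d⟫) C := le_max_right _ _
      nlinarith
    have hFy : F y = max (v₁ + ⟪g, d⟫) C + lam / 2 * ‖y‖ ^ 2
        + 1 / (2 * α) * ‖y - x‖ ^ 2 := by
      simp only [F, hv₁, hi]; ring_nf
    have hFy₀ : F y₀ = max v₁ C + lam / 2 * ‖y₀‖ ^ 2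
        + 1 / (2 * α) * ‖y₀ - x‖ ^ 2 := by
      simp only [F, hv₁]
    rw [hFy, hFy₀, hmax, hn1, hn2]
    have hane : α ≠ 0 := hα.ne'
    have hq : lam / 2 * (2 * ⟪y₀, d⟫) + 1 / (2 * α) * (2 * ⟪y₀ - x, d⟫)
        = -(s * ⟪g, d⟫) := by
      rw [← hscal]; field_simp
    have hA2 : A / (2 * α) * ‖d‖ ^ 2 = lam / 2 * ‖d‖ ^ 2 + 1 / (2 * α) * ‖d‖ ^ 2 := by
      rw [hA_def]; field_simp; ring
    clear_value s v₁ d y₀ τ t A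
    linarith only [hmb, hq, hA2]
  clear_value y₀ τ t A F
  refine ⟨?_, ?_⟩
  · rw [isMinOn_iff]
    intro y _
    have h := key y
    have : 0 ≤ A / (2 * α) * ‖y - y₀‖ ^ 2 := by positivity
    linarith
  · intro y hy
    have h1 := key y
    have h2 := isMinOn_iff.mp hy y₀ (Set.mem_univ _)
    have h3 : A / (2 * α) * ‖y - y₀‖ ^ 2 ≤ 0 := by linarith
    have h4 : 0 < A / (2 * α) := by positivity
    have h5 : ‖y - y₀‖ ^ 2 ≤ 0 := by
      by_contra hcon
      push_neg at hcon
      have := mul_pos h4 hcon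
      linarith
    have h5' : ‖y - y₀‖ ^ 2 = 0 := le_antisymm h5 (sq_nonneg _)
    have h6 : ‖y - y₀‖ = 0 := by simpa using sq_eq_zero_iff.mp h5'
    have := norm_eq_zero.mp h6
    have : y = y₀ := by rwa [sub_eq_zero] at this
    rw [this, hy₀_def, hA_def]
end

section
/- SPS update formula (unregularized case): for g ≠ 0 and C ≤ f₀, the minimizer of y ↦ max{f₀ + ⟨g, y − x⟩, C} + (1/(2α))‖y − x‖² is x − γ g with γ = min{α, (f₀ − C)/‖g‖²}. Moreover the model value at the minimizer equals f₀ − γ‖g‖². -/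
open RealInnerProductSpace

/-- SPS update formula (unregularized case): for `g ≠ 0` and `C ≤ f₀`, the minimizer of
`y ↦ max{f₀ + ⟪g, y - x⟫, C} + (1/(2α))‖y - x‖²` is `x - γ • g` with
`γ = min{α, (f₀ - C)/‖g‖²}`, and the model value at the minimizer is `f₀ - γ‖g‖²`. -/
theorem sps_closed_form {n : ℕ} (α f₀ C : ℝ) (hα : 0 < α) (hC : C ≤ f₀)
    (x g : EuclideanSpace ℝ (Fin n)) (hg : g ≠ 0) :
    let γ : ℝ := min α ((f₀ - C) / ‖g‖ ^ 2)
    let F : EuclideanSpace ℝ (Fin n) → ℝ := fun y =>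
      max (f₀ + ⟪g, y - x⟫) C + 1 / (2 * α) * ‖y - x‖ ^ 2
    IsMinOn F Set.univ (x - γ • g) ∧
      (∀ y, IsMinOn F Set.univ y → y = x - γ • g) ∧
      max (f₀ + ⟪g, (x - γ • g) - x⟫) C = f₀ - γ * ‖g‖ ^ 2 := by
  intro γ F
  have hG : (0:ℝ) < ‖g‖ ^ 2 := by
    have := norm_pos_iff.mpr hg; positivity
  have hγ0 : 0 ≤ γ := le_min hα.le (div_nonneg (by linarith) hG.le)
  have hγα : γ ≤ α := min_le_left _ _
  have hγdiv : γ ≤ (f₀ - C) / ‖g‖ ^ 2 := min_le_right _ _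
  have hγG : γ * ‖g‖ ^ 2 ≤ f₀ - C := (le_div_iff₀ hG).mp hγdiv
  have hkey : (α - γ) * (f₀ - C - γ * ‖g‖ ^ 2) = 0 := by
    rcases le_total α ((f₀ - C) / ‖g‖ ^ 2) with h | h
    · have : γ = α := min_eq_left h
      rw [this]; ring
    · have : γ = (f₀ - C) / ‖g‖ ^ 2 := min_eq_right h
      rw [this]; field_simp; ring
  have hip : ⟪g, (x - γ • g) - x⟫ = -(γ * ‖g‖ ^ 2) := by
    have h1 : (x - γ • g) - x = -(γ • g) := by abel
    rw [h1, inner_neg_right, real_inner_smul_right, real_inner_self_eq_norm_sq]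
  have hmax : max (f₀ + ⟪g, (x - γ • g) - x⟫) C = f₀ - γ * ‖g‖ ^ 2 := by
    rw [hip]
    exact max_eq_left (by linarith)
  have hFstar : F (x - γ • g) = (f₀ - γ * ‖g‖ ^ 2) + 1 / (2 * α) * (γ ^ 2 * ‖g‖ ^ 2) := by
    show max (f₀ + ⟪g, (x - γ • g) - x⟫) C + 1 / (2 * α) * ‖(x - γ • g) - x‖ ^ 2 = _
    have h1 : (x - γ • g) - x = -(γ • g) := by abel
    rw [hmax, h1, norm_neg, norm_smul]
    simp [mul_pow, sq_abs]
  have hineq : ∀ y, 2 * α * F (x - γ • g) + ‖y - (x - γ • g)‖ ^ 2 ≤ 2 * α * F y := by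
    intro y
    have hd : ‖y - (x - γ • g)‖ ^ 2
        = ‖y - x‖ ^ 2 + 2 * (γ * ⟪g, y - x⟫) + γ ^ 2 * ‖g‖ ^ 2 := by
      have h1 : y - (x - γ • g) = (y - x) + γ • g := by abel
      rw [h1, norm_add_sq_real, real_inner_smul_right, real_inner_comm, norm_smul]
      simp [mul_pow, sq_abs]
    have hM1 : f₀ + ⟪g, y - x⟫ ≤ max (f₀ + ⟪g, y - x⟫) C := le_max_left _ _
    have hM2 : C ≤ max (f₀ + ⟪g, y - x⟫) C := le_max_right _ _
    have hFy : F y = max (f₀ + ⟪g, y - x⟫) C + 1 / (2 * α) * ‖y - x‖ ^ 2 := rfl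
    rw [hFstar, hFy]
    have e1 : 2 * α * (1 / (2 * α) * (γ ^ 2 * ‖g‖ ^ 2)) = γ ^ 2 * ‖g‖ ^ 2 := by
      field_simp
    have e2 : 2 * α * (1 / (2 * α) * ‖y - x‖ ^ 2) = ‖y - x‖ ^ 2 := by
      field_simp
    nlinarith [mul_nonneg (sub_nonneg.2 hγα) (sub_nonneg.2 hM2),
      mul_nonneg hγ0 (sub_nonneg.2 hM1), hkey, hd, e1, e2]
  refine ⟨?_, ?_, hmax⟩
  · intro y _
    have h := hineq y
    have h2 : 2 * α * F (x - γ • g) ≤ 2 * α * F y := by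
      linarith [sq_nonneg ‖y - (x - γ • g)‖]
    exact le_of_mul_le_mul_left h2 (by linarith)
  · intro y hy
    have h1 : F y ≤ F (x - γ • g) := hy (Set.mem_univ _)
    have h := hineq y
    have h1' : 2 * α * F y ≤ 2 * α * F (x - γ • g) :=
      mul_le_mul_of_nonneg_left h1 (by linarith)
    have h2 : ‖y - (x - γ • g)‖ ^ 2 ≤ 0 := by linarith
    have h3 : y - (x - γ • g) = 0 := by
      have h4 : ‖y - (x - γ • g)‖ ^ 2 = 0 := le_antisymm h2 (sq_nonneg _)
      have h5 : ‖y - (x - γ • g)‖ = 0 := by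
        exact pow_eq_zero_iff (two_ne_zero) |>.mp h4
      exact norm_eq_zero.mp h5
    exact sub_eq_zero.mp h3
end

section
/- Structure of the regularized truncation subproblem: let φ: ℝⁿ → ℝ ∪ {∞} be proper closed convex, c ∈ ℝ, a, x⁰ ∈ ℝⁿ, β > 0, and y⁺ = argmin_y (c + ⟨a, y⟩)₊ + φ(y) + (1/(2β))‖y − x⁰‖². If c + ⟨a, prox_{βφ}(x⁰ − βa)⟩ > 0 then y⁺ = prox_{βφ}(x⁰ − βa); if c + ⟨a, prox_{βφ}(x⁰)⟩ < 0 then y⁺ = prox_{βφ}(x⁰); otherwise there exists u ∈ [0,1] with c + ⟨a, prox_{βφ}(x⁰ − βua)⟩ = 0 and y⁺ = prox_{βφ}(x⁰ − βua). -/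
open RealInnerProductSpace

private lemma aux_small_t {A B : ℝ} (h : ∀ t : ℝ, 0 < t → t ≤ 1 → 0 ≤ A + t * B) : 0 ≤ A := by
  rcases le_or_gt B 0 with hB | hB
  · have := h 1 one_pos le_rfl; linarith
  · by_contra hA
    push_neg at hA
    have ht0 : 0 < min 1 (-A / (2 * B)) :=
      lt_min one_pos (div_pos (by linarith) (by linarith))
    have h5 := h _ ht0 (min_le_left _ _)
    have h2 : min 1 (-A / (2 * B)) ≤ -A / (2 * B) := min_le_right _ _
    have h3 : min 1 (-A / (2 * B)) * B ≤ (-A / (2 * B)) * B :=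
      mul_le_mul_of_nonneg_right h2 hB.le
    have h4 : (-A / (2 * B)) * B = -A / 2 := by field_simp
    linarith

private lemma subgrad {n : ℕ} {ψ : EuclideanSpace ℝ (Fin n) → ℝ}
    (hψ : ConvexOn ℝ Set.univ ψ) {β : ℝ} (hβ : 0 < β)
    {z p : EuclideanSpace ℝ (Fin n)}
    (hp : IsMinOn (fun y => ψ y + 1 / (2 * β) * ‖y - z‖ ^ 2) Set.univ p)
    (y : EuclideanSpace ℝ (Fin n)) :
    0 ≤ (ψ y - ψ p) + (1 / β) * ⟪p - z, y - p⟫ := by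
  apply aux_small_t (B := 1 / (2 * β) * ‖y - p‖ ^ 2)
  intro t ht ht1
  have hq := isMinOn_iff.mp hp (p + t • (y - p)) (Set.mem_univ _)
  have hcomb : p + t • (y - p) = (1 - t) • p + t • y := by
    rw [smul_sub, sub_smul, one_smul]; abel
  have hconv := hψ.2 (Set.mem_univ p) (Set.mem_univ y)
    (by linarith : (0:ℝ) ≤ 1 - t) ht.le (by ring)
  rw [← hcomb] at hconv
  simp only [smul_eq_mul] at hconv
  have hnorm : ‖p + t • (y - p) - z‖ ^ 2
      = ‖p - z‖ ^ 2 + 2 * (t * ⟪p - z, y - p⟫) + t ^ 2 * ‖y - p‖ ^ 2 := by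
    have h1 : p + t • (y - p) - z = (p - z) + t • (y - p) := by abel
    rw [h1, norm_add_sq_real, real_inner_smul_right, norm_smul, Real.norm_eq_abs,
      mul_pow, sq_abs]
  rw [hnorm] at hq
  have key : 0 ≤ t * ((ψ y - ψ p) + (1 / β) * ⟪p - z, y - p⟫
      + t * (1 / (2 * β) * ‖y - p‖ ^ 2)) := by
    have e : 1 / β = 2 * (1 / (2 * β)) := by field_simp
    rw [e]
    nlinarith [hq, hconv]
  have h6 : 0 ≤ (ψ y - ψ p) + (1 / β) * ⟪p - z, y - p⟫
      + t * (1 / (2 * β) * ‖y - p‖ ^ 2) := by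
    by_contra hc
    push_neg at hc
    nlinarith [key]
  linarith

private lemma firm {n : ℕ} {ψ : EuclideanSpace ℝ (Fin n) → ℝ}
    (hψ : ConvexOn ℝ Set.univ ψ) {β : ℝ} (hβ : 0 < β)
    {z₁ z₂ p₁ p₂ : EuclideanSpace ℝ (Fin n)}
    (h₁ : IsMinOn (fun y => ψ y + 1 / (2 * β) * ‖y - z₁‖ ^ 2) Set.univ p₁)
    (h₂ : IsMinOn (fun y => ψ y + 1 / (2 * β) * ‖y - z₂‖ ^ 2) Set.univ p₂) :
    ‖p₁ - p₂‖ ^ 2 ≤ ⟪p₁ - p₂, z₁ - z₂⟫ := by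
  have hs₁ := subgrad hψ hβ h₁ p₂
  have hs₂ := subgrad hψ hβ h₂ p₁
  have e : ⟪p₁ - z₁, p₂ - p₁⟫ + ⟪p₂ - z₂, p₁ - p₂⟫
      = ⟪p₁ - p₂, z₁ - z₂⟫ - ‖p₁ - p₂‖ ^ 2 := by
    rw [← real_inner_self_eq_norm_sq]
    simp only [inner_sub_left, inner_sub_right]
    rw [real_inner_comm p₂ p₁, real_inner_comm z₁ p₂, real_inner_comm z₁ p₁,
      real_inner_comm z₂ p₁, real_inner_comm z₂ p₂]
    ring
  have hsum : 0 ≤ (1 / β) * (⟪p₁ - z₁, p₂ - p₁⟫ + ⟪p₂ - z₂, p₁ - p₂⟫) := by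
    have : (1 / β) * (⟪p₁ - z₁, p₂ - p₁⟫ + ⟪p₂ - z₂, p₁ - p₂⟫)
        = ((1 / β) * ⟪p₁ - z₁, p₂ - p₁⟫) + ((1 / β) * ⟪p₂ - z₂, p₁ - p₂⟫) := by ring
    rw [this]
    linarith
  rw [e] at hsum
  have hβ' : 0 < 1 / β := by positivity
  nlinarith [hsum]

private lemma min_unique {n : ℕ} {ψ : EuclideanSpace ℝ (Fin n) → ℝ}
    (hψ : ConvexOn ℝ Set.univ ψ) {β : ℝ} (hβ : 0 < β)
    {z p q : EuclideanSpace ℝ (Fin n)}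
    (hp : IsMinOn (fun y => ψ y + 1 / (2 * β) * ‖y - z‖ ^ 2) Set.univ p)
    (hq : IsMinOn (fun y => ψ y + 1 / (2 * β) * ‖y - z‖ ^ 2) Set.univ q) :
    p = q := by
  have h := firm hψ hβ hp hq
  rw [sub_self, inner_zero_right] at h
  have h2 : ‖p - q‖ ^ 2 = 0 := le_antisymm h (sq_nonneg _)
  have h3 : ‖p - q‖ = 0 := by
    have := pow_eq_zero_iff (n := 2) (by norm_num) |>.mp h2
    exact this
  rwa [norm_eq_zero, sub_eq_zero] at h3

/-- Structure of the regularized truncation subproblem: with `φ` convex,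
`prox` a proximal operator for `φ` (i.e. `prox β z` minimizes `φ(y) + (1/(2β))‖y - z‖²`),
and `y⁺` the minimizer of `(c + ⟪a, y⟫)₊ + φ(y) + (1/(2β))‖y - x⁰‖²`:
if `c + ⟪a, prox β (x⁰ - β•a)⟫ > 0` then `y⁺ = prox β (x⁰ - β•a)`;
if `c + ⟪a, prox β x⁰⟫ < 0` then `y⁺ = prox β x⁰`; otherwise there exists `u ∈ [0,1]`
with `c + ⟪a, prox β (x⁰ - (βu)•a)⟫ = 0` and `y⁺ = prox β (x⁰ - (βu)•a)`. -/
theorem regularized_truncation_subproblem {n : ℕ}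
    (φ : EuclideanSpace ℝ (Fin n) → ℝ) (hφ : ConvexOn ℝ Set.univ φ)
    (c : ℝ) (a x₀ : EuclideanSpace ℝ (Fin n)) (β : ℝ) (hβ : 0 < β)
    (prox : ℝ → EuclideanSpace ℝ (Fin n) → EuclideanSpace ℝ (Fin n))
    (hprox : ∀ z, IsMinOn (fun y : EuclideanSpace ℝ (Fin n) =>
        φ y + 1 / (2 * β) * ‖y - z‖ ^ 2) Set.univ (prox β z))
    (yp : EuclideanSpace ℝ (Fin n))
    (hyp : IsMinOn (fun y : EuclideanSpace ℝ (Fin n) =>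
        max (c + ⟪a, y⟫) 0 + φ y + 1 / (2 * β) * ‖y - x₀‖ ^ 2) Set.univ yp) :
    (0 < c + ⟪a, prox β (x₀ - β • a)⟫ → yp = prox β (x₀ - β • a)) ∧
    (c + ⟪a, prox β x₀⟫ < 0 → yp = prox β x₀) ∧
    (¬ (0 < c + ⟪a, prox β (x₀ - β • a)⟫) → ¬ (c + ⟪a, prox β x₀⟫ < 0) →
      ∃ u ∈ Set.Icc (0 : ℝ) 1, c + ⟪a, prox β (x₀ - (β * u) • a)⟫ = 0 ∧
        yp = prox β (x₀ - (β * u) • a)) := by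
  have haff : ConvexOn ℝ Set.univ (fun y : EuclideanSpace ℝ (Fin n) => c + ⟪a, y⟫) := by
    refine ⟨convex_univ, ?_⟩
    intro x _ y _ s t hs ht hst
    simp only [smul_eq_mul]
    rw [inner_add_right, real_inner_smul_right, real_inner_smul_right]
    apply le_of_eq
    linear_combination (-c) * hst
  have hmaxcvx : ConvexOn ℝ Set.univ
      (fun y : EuclideanSpace ℝ (Fin n) => max (c + ⟪a, y⟫) 0) :=
    haff.sup (convexOn_const 0 convex_univ)
  have hΨ : ConvexOn ℝ Set.univ
      (fun y : EuclideanSpace ℝ (Fin n) => max (c + ⟪a, y⟫) 0 + φ y) :=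
    hmaxcvx.add hφ
  have hid : ∀ (u : ℝ) (w : EuclideanSpace ℝ (Fin n)),
      1 / (2 * β) * ‖w - (x₀ - (β * u) • a)‖ ^ 2
        = 1 / (2 * β) * ‖w - x₀‖ ^ 2 + u * ⟪a, w⟫ - u * ⟪a, x₀⟫
          + β * u ^ 2 / 2 * ‖a‖ ^ 2 := by
    intro u w
    have h1 : w - (x₀ - (β * u) • a) = (w - x₀) + (β * u) • a := by abel
    have h2 : ⟪w - x₀, a⟫ = ⟪a, w⟫ - ⟪a, x₀⟫ := by
      rw [inner_sub_left, real_inner_comm w a, real_inner_comm x₀ a]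
    rw [h1, norm_add_sq_real, real_inner_smul_right, norm_smul, Real.norm_eq_abs,
      mul_pow, sq_abs, h2]
    field_simp
    ring
  have main : ∀ u : ℝ, 0 ≤ u → u ≤ 1 →
      max (c + ⟪a, prox β (x₀ - (β * u) • a)⟫) 0
        = u * (c + ⟪a, prox β (x₀ - (β * u) • a)⟫) →
      yp = prox β (x₀ - (β * u) • a) := by
    intro u hu0 hu1 hmax
    have hP := hprox (x₀ - (β * u) • a)
    have hminF : IsMinOn (fun y : EuclideanSpace ℝ (Fin n) =>
        max (c + ⟪a, y⟫) 0 + φ y + 1 / (2 * β) * ‖y - x₀‖ ^ 2) Set.univ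
        (prox β (x₀ - (β * u) • a)) := by
      rw [isMinOn_iff]
      intro y _
      have hG := isMinOn_iff.mp hP y (Set.mem_univ y)
      rw [hid u (prox β (x₀ - (β * u) • a)), hid u y] at hG
      have hmaxy : u * (c + ⟪a, y⟫) ≤ max (c + ⟪a, y⟫) 0 := by
        rcases le_or_gt 0 (c + ⟪a, y⟫) with h | h
        · calc u * (c + ⟪a, y⟫) ≤ 1 * (c + ⟪a, y⟫) :=
              mul_le_mul_of_nonneg_right hu1 h
            _ = c + ⟪a, y⟫ := one_mul _
            _ ≤ max (c + ⟪a, y⟫) 0 := le_max_left _ _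
        · exact (mul_nonpos_of_nonneg_of_nonpos hu0 h.le).trans (le_max_right _ _)
      rw [hmax]
      nlinarith [hG, hmaxy]
    exact min_unique (ψ := fun y : EuclideanSpace ℝ (Fin n) =>
      max (c + ⟪a, y⟫) 0 + φ y) hΨ hβ hyp hminF
  refine ⟨?_, ?_, ?_⟩
  · intro hpos
    have h := main 1 zero_le_one le_rfl (by
      rw [mul_one, one_mul]
      exact max_eq_left hpos.le)
    rw [mul_one] at h
    exact h
  · intro hneg
    have h := main 0 le_rfl zero_le_one (by
      simp only [mul_zero, zero_smul, sub_zero]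
      rw [max_eq_right hneg.le, zero_mul])
    simp only [mul_zero, zero_smul, sub_zero] at h
    exact h
  · intro h1 h2
    push_neg at h1 h2
    set g : ℝ → ℝ := fun u => c + ⟪a, prox β (x₀ - (β * u) • a)⟫ with hgdef
    have hlip : ∀ u v : ℝ, |g u - g v| ≤ (β * ‖a‖ ^ 2) * |u - v| := by
      intro u v
      have hf := firm hφ hβ (hprox (x₀ - (β * u) • a)) (hprox (x₀ - (β * v) • a))
      have hz : (x₀ - (β * u) • a) - (x₀ - (β * v) • a) = (β * (v - u)) • a := by
        module
      rw [hz] at hf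
      have hzn : ‖(β * (v - u)) • a‖ = β * |u - v| * ‖a‖ := by
        rw [norm_smul, Real.norm_eq_abs, abs_mul, abs_of_pos hβ, abs_sub_comm]
      have hcs := real_inner_le_norm (prox β (x₀ - (β * u) • a) - prox β (x₀ - (β * v) • a))
        ((β * (v - u)) • a)
      have hd : ‖prox β (x₀ - (β * u) • a) - prox β (x₀ - (β * v) • a)‖
          ≤ β * |u - v| * ‖a‖ := by
        rcases eq_or_lt_of_le (norm_nonneg (prox β (x₀ - (β * u) • a)
            - prox β (x₀ - (β * v) • a))) with h0 | h0
        · rw [← h0]; positivity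
        · nlinarith [hf, hcs, hzn]
      have hgv : g u - g v = ⟪a, prox β (x₀ - (β * u) • a) - prox β (x₀ - (β * v) • a)⟫ := by
        simp only [hgdef, inner_sub_right]
        ring
      rw [hgv]
      calc |⟪a, prox β (x₀ - (β * u) • a) - prox β (x₀ - (β * v) • a)⟫|
          ≤ ‖a‖ * ‖prox β (x₀ - (β * u) • a) - prox β (x₀ - (β * v) • a)‖ :=
            abs_real_inner_le_norm _ _
        _ ≤ ‖a‖ * (β * |u - v| * ‖a‖) :=
            mul_le_mul_of_nonneg_left hd (norm_nonneg a)
        _ = (β * ‖a‖ ^ 2) * |u - v| := by ring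
    have hcont : Continuous g := by
      have hK : (0:ℝ) ≤ β * ‖a‖ ^ 2 := by positivity
      refine (LipschitzWith.of_dist_le_mul (K := ⟨β * ‖a‖ ^ 2, hK⟩) ?_).continuous
      intro u v
      rw [Real.dist_eq, Real.dist_eq]
      exact hlip u v
    have hg1 : g 1 ≤ 0 := by
      have : (β * 1) • a = β • a := by rw [mul_one]
      simpa [hgdef, this] using h1
    have hg0 : 0 ≤ g 0 := by
      simpa [hgdef] using h2
    have hmem : (0:ℝ) ∈ g '' Set.Icc 0 1 :=
      intermediate_value_Icc' zero_le_one hcont.continuousOn ⟨hg1, hg0⟩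
    obtain ⟨u, hu, hgu⟩ := hmem
    have hgu' : c + ⟪a, prox β (x₀ - (β * u) • a)⟫ = 0 := hgu
    refine ⟨u, hu, hgu', main u hu.1 hu.2 ?_⟩
    rw [hgu']
    simp
end

section
/- Telescoping bound for the decaying step size α_k = 1/(λ(k + k₀)): if nonnegative reals Δ_k satisfy (1 + α_k λ)Δ_{k+1} ≤ Δ_k + 2α_k e_{k+1}·(−1) + θβα_k² with e_{k+1} := E[ψ(x^{k+1}) − ψ(x⋆)] ≥ 0, i.e., 2α_k e_{k+1} ≤ Δ_k − (1 + α_k λ)Δ_{k+1} + θβα_k², then ∑_{k=0}^{K−1} e_{k+1} ≤ (λ k₀/2)Δ_0 + (θβ/(2λ)) ∑_{k=0}^{K−1} 1/(k + k₀). -/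
open Finset

/-- Telescoping bound for the decaying step size `α_k = 1/(λ(k + k₀))`: if nonnegative
sequences `Δ_k`, `e_k` satisfy `2α_k e_{k+1} ≤ Δ_k - (1 + α_k λ)Δ_{k+1} + θβα_k²`, then
`∑_{k<K} e_{k+1} ≤ (λk₀/2)Δ_0 + (θβ/(2λ)) ∑_{k<K} 1/(k + k₀)`. -/
theorem telescoping_decaying_step (lam θ β : ℝ) (hlam : 0 < lam) (hθ : 1 < θ) (hβ : 0 ≤ β)
    (k₀ : ℕ) (hk₀ : 1 ≤ k₀) (Δ e : ℕ → ℝ) (hΔ : ∀ k, 0 ≤ Δ k) (he : ∀ k, 0 ≤ e k)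
    (α : ℕ → ℝ) (hα : ∀ k, α k = 1 / (lam * (k + k₀)))
    (hrec : ∀ k, 2 * α k * e (k + 1) ≤ Δ k - (1 + α k * lam) * Δ (k + 1) + θ * β * α k ^ 2) :
    ∀ K : ℕ, ∑ k ∈ range K, e (k + 1)
      ≤ lam * k₀ / 2 * Δ 0 + θ * β / (2 * lam) * ∑ k ∈ range K, (1 : ℝ) / (k + k₀) := by
  have key : ∀ K : ℕ, ∑ k ∈ range K, e (k + 1) + lam * ((K : ℝ) + k₀) / 2 * Δ K
      ≤ lam * k₀ / 2 * Δ 0 + θ * β / (2 * lam) * ∑ k ∈ range K, (1 : ℝ) / (k + k₀) := by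
    intro K
    induction K with
    | zero => simp
    | succ K ih =>
      have hc : (0 : ℝ) < (K : ℝ) + k₀ := by
        have : (1 : ℝ) ≤ (k₀ : ℝ) := by exact_mod_cast hk₀
        positivity
      have step : e (K + 1) + lam * (((K : ℝ) + 1) + k₀) / 2 * Δ (K + 1)
          ≤ lam * ((K : ℝ) + k₀) / 2 * Δ K + θ * β / (2 * lam) * (1 / ((K : ℝ) + k₀)) := by
        have h := hrec K
        rw [hα K] at h
        have h2 := mul_le_mul_of_nonneg_left h
          (by positivity : (0:ℝ) ≤ lam * ((K:ℝ)+k₀) / 2)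
        have e1 : lam * ((K:ℝ)+k₀) / 2 * (2 * (1 / (lam * ((K:ℝ) + k₀))) * e (K+1))
            = e (K+1) := by field_simp
        have e2 : lam * ((K:ℝ)+k₀) / 2 * (Δ K - (1 + (1 / (lam * ((K:ℝ) + k₀))) * lam)
              * Δ (K + 1) + θ * β * (1 / (lam * ((K:ℝ) + k₀))) ^ 2)
            = lam * ((K:ℝ)+k₀) / 2 * Δ K - (lam * ((K:ℝ)+k₀) / 2 + lam / 2) * Δ (K+1)
              + θ * β / (2 * lam) * (1 / ((K : ℝ) + k₀)) := by
          field_simp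
        rw [e1, e2] at h2
        nlinarith [h2]
      rw [sum_range_succ, sum_range_succ, mul_add (θ * β / (2 * lam))]
      push_cast
      push_cast at step
      linarith [ih, step]
  intro K
  have h := key K
  have hΔK : 0 ≤ lam * ((K : ℝ) + k₀) / 2 * Δ K := by
    have h1 : (1 : ℝ) ≤ (k₀ : ℝ) := by exact_mod_cast hk₀
    exact mul_nonneg (by positivity) (hΔ K)
  linarith
end
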